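/- Let f ∈ L^1(ℝ). Then there is a constant c₁ > 0, independent of f and t, such that for all t > 0, sup_{λ∈ℝ} [ min{1,(λt)²} · |f̂(λ)| ] ≤ c₁ · Ω₁[f](t), where Ω₁[f](t) = sup_{0<h<t} ‖f(·+h)+f(·−h)−2f(·)‖_{L¹(ℝ)}. -/

import Mathlib

/-!
The second difference `Δ_h f = f(· + h) + f(· - h) - 2 f` has Fourier transform
`(2 cos (λh) - 2) f̂(λ)`, so `(2 - 2 cos (λh)) |f̂(λ)| ≤ ‖Δ_h f‖₁ ≤ Ω₁[f](t)` for `0 < h < t`.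
It remains to pick `h ∈ (0, t)` with `min {1, (λt)²} ≤ 10 (2 - 2 cos (λh))`: for `|λ|t ≤ π`,
`h = t/2` works by `1 - cos x ≥ 2x²/π²` on `[-π, π]` and `π² < 10`; otherwise `h = π/|λ|`
gives `cos (λh) = -1`.
-/

open MeasureTheory Real Set

/-- The one-dimensional Fourier transform `f̂(λ) = ∫ f(x) e^{-iλx} dx`. -/
noncomputable def fourierTransform1d (f : ℝ → ℂ) (l : ℝ) : ℂ :=
  ∫ x : ℝ, Complex.exp (-(Complex.I * l * x)) * f x

/-- The `L^p`-modulus of continuity based on symmetric second-order differences: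
`Ω_p[f](t) = sup_{0<h<t} ‖f(·+h)+f(·−h)−2f(·)‖_{L^p(ℝ)}`. -/
noncomputable def secondModulus (p : ℝ) (f : ℝ → ℂ) (t : ℝ) : ℝ :=
  (⨆ h ∈ Set.Ioo (0:ℝ) t,
    eLpNorm (fun x => f (x + h) + f (x - h) - 2 * f x) (ENNReal.ofReal p) volume).toReal

def secondDiff (f : ℝ → ℂ) (h : ℝ) : ℝ → ℂ := fun x => f (x + h) + f (x - h) - 2 * f x

lemma norm_cexp_neg_I_mul_mul (l x : ℝ) : ‖Complex.exp (-(Complex.I * l * x))‖ = 1 := by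
  simp [Complex.norm_exp]

section FourierTransform

variable {f g : ℝ → ℂ}

lemma MeasureTheory.Integrable.fourierIntegrand (hf : Integrable f volume) (l : ℝ) :
    Integrable (fun x : ℝ => Complex.exp (-(Complex.I * l * x)) * f x) volume :=
  hf.bdd_mul (by fun_prop) (.of_forall fun x => (norm_cexp_neg_I_mul_mul l x).le)

lemma fourierTransform1d_add (hf : Integrable f volume) (hg : Integrable g volume) (l : ℝ) :
    fourierTransform1d (fun x => f x + g x) l
      = fourierTransform1d f l + fourierTransform1d g l := by
  simp only [fourierTransform1d, mul_add]
  exact integral_add (hf.fourierIntegrand l) (hg.fourierIntegrand l)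

lemma fourierTransform1d_sub (hf : Integrable f volume) (hg : Integrable g volume) (l : ℝ) :
    fourierTransform1d (fun x => f x - g x) l
      = fourierTransform1d f l - fourierTransform1d g l := by
  simp only [fourierTransform1d, mul_sub]
  exact integral_sub (hf.fourierIntegrand l) (hg.fourierIntegrand l)

lemma fourierTransform1d_const_mul (c : ℂ) (f : ℝ → ℂ) (l : ℝ) :
    fourierTransform1d (fun x => c * f x) l = c * fourierTransform1d f l := by
  simp only [fourierTransform1d, mul_left_comm _ c, integral_const_mul]

lemma fourierTransform1d_comp_add_right (f : ℝ → ℂ) (h l : ℝ) :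
    fourierTransform1d (fun x => f (x + h)) l
      = Complex.exp (Complex.I * l * h) * fourierTransform1d f l := by
  calc fourierTransform1d (fun x => f (x + h)) l
      = ∫ x : ℝ, Complex.exp (Complex.I * l * h)
          * (Complex.exp (-(Complex.I * l * ↑(x + h))) * f (x + h)) := by
        refine integral_congr_ae (.of_forall fun x => ?_)
        simp only [← mul_assoc, ← Complex.exp_add]
        push_cast
        ring_nf
    _ = Complex.exp (Complex.I * l * h) * fourierTransform1d f l := by
        rw [integral_const_mul,
          integral_add_right_eq_self (fun y : ℝ => Complex.exp (-(Complex.I * l * y)) * f y) h,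
          fourierTransform1d]

lemma fourierTransform1d_comp_sub_right (f : ℝ → ℂ) (h l : ℝ) :
    fourierTransform1d (fun x => f (x - h)) l
      = Complex.exp (-(Complex.I * l * h)) * fourierTransform1d f l := by
  simpa [sub_eq_add_neg] using fourierTransform1d_comp_add_right f (-h) l

lemma fourierTransform1d_secondDiff (hf : Integrable f volume) (h l : ℝ) :
    fourierTransform1d (secondDiff f h) l
      = (2 * cos (l * h) - 2 : ℝ) * fourierTransform1d f l := by
  have hsum : Integrable (fun x => f (x + h) + f (x - h)) volume :=
    (hf.comp_add_right h).add (hf.comp_sub_right h)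
  unfold secondDiff
  rw [fourierTransform1d_sub hsum (hf.const_mul 2),
    fourierTransform1d_add (hf.comp_add_right h) (hf.comp_sub_right h),
    fourierTransform1d_comp_add_right, fourierTransform1d_comp_sub_right,
    fourierTransform1d_const_mul]
  push_cast
  rw [Complex.cos, show Complex.I * l * h = l * h * Complex.I by ring]
  ring_nf

lemma norm_fourierTransform1d_le_eLpNorm (f : ℝ → ℂ) (l : ℝ) :
    ‖fourierTransform1d f l‖ ≤ (eLpNorm f 1 volume).toReal := by
  refine (norm_integral_le_lintegral_norm _).trans_eq ?_
  simp only [norm_mul, norm_cexp_neg_I_mul_mul, one_mul, ofReal_norm,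
    eLpNorm_one_eq_lintegral_enorm]

end FourierTransform

lemma eLpNorm_secondDiff_le {f : ℝ → ℂ} {p : ENNReal} (hp : 1 ≤ p)
    (hf : AEStronglyMeasurable f volume) (h : ℝ) :
    eLpNorm (secondDiff f h) p volume ≤ 4 * eLpNorm f p volume := by
  have hplus : AEStronglyMeasurable (fun x => f (x + h)) volume :=
    hf.comp_measurePreserving (measurePreserving_add_right volume h)
  have hminus : AEStronglyMeasurable (fun x => f (x - h)) volume :=
    hf.comp_measurePreserving (measurePreserving_sub_right volume h)
  have htwo : eLpNorm (fun x => 2 * f x) p volume = 2 * eLpNorm f p volume := by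
    rw [show (fun x => 2 * f x) = (2 : ℂ) • f from rfl, eLpNorm_const_smul]
    simp [enorm_eq_nnnorm]
  have hplusNorm : eLpNorm (fun x => f (x + h)) p volume = eLpNorm f p volume :=
    eLpNorm_comp_measurePreserving hf (measurePreserving_add_right volume h)
  have hminusNorm : eLpNorm (fun x => f (x - h)) p volume = eLpNorm f p volume :=
    eLpNorm_comp_measurePreserving hf (measurePreserving_sub_right volume h)
  calc eLpNorm (secondDiff f h) p volume
      ≤ eLpNorm (fun x => f (x + h)) p volume + eLpNorm (fun x => f (x - h)) p volume
          + eLpNorm (fun x => 2 * f x) p volume :=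
        (eLpNorm_sub_le (hplus.add hminus) (hf.const_mul 2) hp).trans
          (add_le_add_left (eLpNorm_add_le hplus hminus hp) _)
    _ = 4 * eLpNorm f p volume := by
        rw [htwo, hplusNorm, hminusNorm]
        ring

lemma eLpNorm_secondDiff_le_secondModulus {f : ℝ → ℂ} {p : ℝ} (hp : 1 ≤ p)
    (hf : MemLp f (ENNReal.ofReal p) volume) {h t : ℝ} (hh : h ∈ Ioo 0 t) :
    (eLpNorm (secondDiff f h) (ENNReal.ofReal p) volume).toReal ≤ secondModulus p f t := by
  have hp' : 1 ≤ ENNReal.ofReal p := by simpa using ENNReal.ofReal_le_ofReal hp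
  have hbdd : (⨆ h ∈ Ioo 0 t, eLpNorm (secondDiff f h) (ENNReal.ofReal p) volume)
      ≤ 4 * eLpNorm f (ENNReal.ofReal p) volume :=
    iSup₂_le fun h _ => eLpNorm_secondDiff_le hp' hf.aestronglyMeasurable h
  exact ENNReal.toReal_mono
    (ne_top_of_le_ne_top (ENNReal.mul_ne_top (by norm_num) hf.eLpNorm_ne_top) hbdd)
    (le_biSup (fun h => eLpNorm (secondDiff f h) _ volume) hh)

lemma two_sub_two_cos_mul_norm_fourierTransform1d_le {f : ℝ → ℂ} (hf : Integrable f volume)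
    {h t : ℝ} (hh : h ∈ Ioo 0 t) (l : ℝ) :
    (2 - 2 * cos (l * h)) * ‖fourierTransform1d f l‖ ≤ secondModulus 1 f t := by
  have hnonneg : 0 ≤ 2 - 2 * cos (l * h) := by linarith [cos_le_one (l * h)]
  calc (2 - 2 * cos (l * h)) * ‖fourierTransform1d f l‖
      = ‖fourierTransform1d (secondDiff f h) l‖ := by
        rw [fourierTransform1d_secondDiff hf, norm_mul, Complex.norm_real, norm_of_nonpos] <;>
          linarith
    _ ≤ (eLpNorm (secondDiff f h) 1 volume).toReal := norm_fourierTransform1d_le_eLpNorm _ l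
    _ ≤ secondModulus 1 f t := by
        simpa using eLpNorm_secondDiff_le_secondModulus le_rfl
          (by simpa using memLp_one_iff_integrable.2 hf) hh

lemma exists_mem_Ioo_min_one_sq_le {t : ℝ} (ht : 0 < t) (l : ℝ) :
    ∃ h ∈ Ioo 0 t, min 1 ((|l| * t) ^ 2) ≤ 10 * (2 - 2 * cos (l * h)) := by
  have hπ10 : π ^ 2 < 10 := by nlinarith [pi_pos, pi_lt_d2]
  by_cases hsmall : |l| * t ≤ π
  · refine ⟨t / 2, ⟨by linarith, by linarith⟩, (min_le_right _ _).trans ?_⟩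
    have habs : |l * (t / 2)| ≤ π := by
      rw [abs_mul, abs_of_pos (half_pos ht)]
      nlinarith [abs_nonneg l]
    have hcos := cos_le_one_sub_mul_cos_sq habs
    have hsq : (|l| * t) ^ 2 = 4 * (l * (t / 2)) ^ 2 := by
      rw [mul_pow, sq_abs]
      ring
    have hquad : 4 * (l * (t / 2)) ^ 2 ≤ π ^ 2 * (2 - 2 * cos (l * (t / 2))) := by
      have key : 2 / π ^ 2 * (l * (t / 2)) ^ 2 ≤ 1 - cos (l * (t / 2)) := by linarith
      rw [div_mul_eq_mul_div, div_le_iff₀ (by positivity)] at key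
      linarith
    have hnonneg : 0 ≤ 2 - 2 * cos (l * (t / 2)) := by linarith [cos_le_one (l * (t / 2))]
    nlinarith [mul_le_mul_of_nonneg_right hπ10.le hnonneg]
  · rw [not_le] at hsmall
    have hl : 0 < |l| := by
      by_contra! hl
      nlinarith [abs_nonneg l, pi_pos]
    refine ⟨π / |l|, ⟨by positivity, (div_lt_iff₀ hl).2 (by linarith)⟩, ?_⟩
    have hcos : cos (l * (π / |l|)) = -1 := by
      rw [← cos_abs, abs_mul, abs_of_pos (by positivity : 0 < π / |l|), mul_div_cancel₀ _ hl.ne',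
        cos_pi]
    rw [hcos]
    linarith [min_le_left 1 ((|l| * t) ^ 2)]

/-- for `f ∈ L¹(ℝ)`,
`sup_λ [min{1,(λt)²}·|f̂(λ)|] ≤ c₁·Ω₁[f](t)` with `c₁` independent of `f` and `t`. -/
theorem riemann_lebesgue_quantitative_L1 :
    ∃ c₁ : ℝ, 0 < c₁ ∧
      ∀ (f : ℝ → ℂ), Integrable f volume →
        ∀ t : ℝ, 0 < t →
          ∀ l : ℝ,
            min 1 ((|l| * t) ^ 2) * ‖fourierTransform1d f l‖ ≤ c₁ * secondModulus 1 f t := by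
  refine ⟨10, by norm_num, fun f hf t ht l => ?_⟩
  obtain ⟨h, hh, hmin⟩ := exists_mem_Ioo_min_one_sq_le ht l
  calc min 1 ((|l| * t) ^ 2) * ‖fourierTransform1d f l‖
      ≤ 10 * (2 - 2 * cos (l * h)) * ‖fourierTransform1d f l‖ := by gcongr
    _ ≤ 10 * secondModulus 1 f t := by
        rw [mul_assoc]
        gcongr
        exact two_sub_two_cos_mul_norm_fourierTransform1d_le hf hh l
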